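/- arXiv:2407.17537 — 2 statements merged into one kernel-verified Lean document; each statement's English description precedes it below -/
import Mathlib

section
/- Let R₁ and R₂ be image-finite Kripke frames over At. Two worlds X₀ (in R₁) and Y₀ (in R₂) satisfy exactly the same epistemic formulas if and only if there exists a binary relation 𝓑 on Set At with (X₀,Y₀) ∈ 𝓑 such that whenever (X,Y) ∈ 𝓑 then X = Y, and for every agent i: if (X,X') ∈ R₁ i then there is Y' with (Y,Y') ∈ R₂ i and (X',Y') ∈ 𝓑, and if (Y,Y') ∈ R₂ i then there is X' with (X,X') ∈ R₁ i and (X',Y') ∈ 𝓑. -/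
/-- Epistemic formulas: ψ ::= ⊤ | p | ¬ψ | ψ∧ψ | K_i ψ -/
inductive EForm (At A : Type) : Type
  | top : EForm At A
  | atom : At → EForm At A
  | neg : EForm At A → EForm At A
  | conj : EForm At A → EForm At A → EForm At A
  | know : A → EForm At A → EForm At A

/-- Epistemic satisfaction of ψ at a world `X : Set At` w.r.t. a frame `R`
(identity valuation: `p` holds at `X` iff `p ∈ X`). -/
def esat {At A : Type} (R : A → Set At → Set At → Prop) :
    Set At → EForm At A → Prop
  | _, .top => True
  | X, .atom p => p ∈ X
  | X, .neg ψ => ¬ esat R X ψ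
  | X, .conj ψ₁ ψ₂ => esat R X ψ₁ ∧ esat R X ψ₂
  | X, .know i ψ => ∀ Y, R i X Y → esat R Y ψ

/-- A frame is image-finite if every world has finitely many successors
under each agent's accessibility relation. -/
def FrameImageFinite {At A : Type} (R : A → Set At → Set At → Prop) : Prop :=
  ∀ (i : A) (X : Set At), {Y | R i X Y}.Finite

/-- Finite conjunction of a list of formulas. -/
def conjList {At A : Type} : List (EForm At A) → EForm At A
  | [] => .top
  | ψ :: l => .conj ψ (conjList l)

lemma esat_conjList {At A : Type} (R : A → Set At → Set At → Prop)
    (X : Set At) : ∀ l : List (EForm At A),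
    esat R X (conjList l) ↔ ∀ ψ ∈ l, esat R X ψ
  | [] => by simp [conjList, esat]
  | ψ :: l => by
    simp only [conjList, esat, List.mem_cons]
    rw [esat_conjList R X l]
    constructor
    · rintro ⟨h1, h2⟩ φ (rfl | hφ)
      · exact h1
      · exact h2 _ hφ
    · intro h; exact ⟨h _ (Or.inl rfl), fun φ hφ => h φ (Or.inr hφ)⟩

/-- For image-finite frames: two worlds satisfy exactly the same epistemic
formulas iff they are related by a bisimulation-like relation. -/
theorem frame_equiv_iff_bisim {At A : Type}
    (R₁ R₂ : A → Set At → Set At → Prop)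
    (h₁ : FrameImageFinite R₁) (h₂ : FrameImageFinite R₂)
    (X₀ Y₀ : Set At) :
    (∀ ψ : EForm At A, esat R₁ X₀ ψ ↔ esat R₂ Y₀ ψ) ↔
    ∃ 𝓑 : Set At → Set At → Prop, 𝓑 X₀ Y₀ ∧
      ∀ X Y, 𝓑 X Y → X = Y ∧
        (∀ (i : A) X', R₁ i X X' → ∃ Y', R₂ i Y Y' ∧ 𝓑 X' Y') ∧
        (∀ (i : A) Y', R₂ i Y Y' → ∃ X', R₁ i X X' ∧ 𝓑 X' Y') := by
  constructor
  · intro hequiv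
    refine ⟨fun X Y => ∀ ψ : EForm At A, esat R₁ X ψ ↔ esat R₂ Y ψ, hequiv, ?_⟩
    intro X Y hXY
    refine ⟨?_, ?_, ?_⟩
    · ext p; exact hXY (.atom p)
    · intro i X' hXX'
      by_contra hcon
      push_neg at hcon
      -- for each successor Y' of Y, find a formula true at X' but false at Y'
      have key : ∀ Y', R₂ i Y Y' → ∃ ψ, esat R₁ X' ψ ∧ ¬ esat R₂ Y' ψ := by
        intro Y' hYY'
        have := hcon Y' hYY'
        obtain ⟨ψ, hψ⟩ := this
        rcases hψ with ⟨h1, h2⟩ | ⟨h1, h2⟩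
        · exact ⟨ψ, h1, h2⟩
        · exact ⟨.neg ψ, h1, fun hc => hc h2⟩
      classical
      choose g hg1 hg2 using key
      set S := (h₂ i Y).toFinset with hS
      let L : List (EForm At A) := S.toList.attach.map
        (fun Y' => g Y'.1 (by
          have := Y'.2
          rw [Finset.mem_toList, Set.Finite.mem_toFinset] at this
          exact this))
      set φ := conjList L with hφ
      have hX'φ : esat R₁ X' φ := by
        rw [hφ, esat_conjList]
        intro ψ hψ
        simp only [L, List.mem_map, List.mem_attach] at hψ
        obtain ⟨⟨Y', hY'⟩, _, rfl⟩ := hψ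
        exact hg1 _ _
      have hYK : esat R₂ Y (.know i (.neg φ)) := by
        intro Y' hYY'
        show ¬ esat R₂ Y' φ
        rw [hφ, esat_conjList]
        intro hall
        refine hg2 Y' hYY' (hall (g Y' hYY') ?_)
        simp only [L, List.mem_map, List.mem_attach]
        refine ⟨⟨Y', ?_⟩, by simp⟩
        rw [Finset.mem_toList, Set.Finite.mem_toFinset]
        exact hYY'
      have hXK : esat R₁ X (.know i (.neg φ)) := (hXY _).mpr hYK
      exact hXK X' hXX' hX'φ
    · intro i Y' hYY'
      by_contra hcon
      push_neg at hcon
      have key : ∀ X', R₁ i X X' → ∃ ψ, esat R₂ Y' ψ ∧ ¬ esat R₁ X' ψ := by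
        intro X' hXX'
        have := hcon X' hXX'
        obtain ⟨ψ, hψ⟩ := this
        rcases hψ with ⟨h1, h2⟩ | ⟨h1, h2⟩
        · exact ⟨.neg ψ, h2, fun hc => hc h1⟩
        · exact ⟨ψ, h2, h1⟩
      classical
      choose g hg1 hg2 using key
      set S := (h₁ i X).toFinset with hS
      let L : List (EForm At A) := S.toList.attach.map
        (fun X' => g X'.1 (by
          have := X'.2
          rw [Finset.mem_toList, Set.Finite.mem_toFinset] at this
          exact this))
      set φ := conjList L with hφ
      have hY'φ : esat R₂ Y' φ := by
        rw [hφ, esat_conjList]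
        intro ψ hψ
        simp only [L, List.mem_map, List.mem_attach] at hψ
        obtain ⟨⟨X', hX'⟩, _, rfl⟩ := hψ
        exact hg1 _ _
      have hXK : esat R₁ X (.know i (.neg φ)) := by
        intro X' hXX'
        show ¬ esat R₁ X' φ
        rw [hφ, esat_conjList]
        intro hall
        refine hg2 X' hXX' (hall (g X' hXX') ?_)
        simp only [L, List.mem_map, List.mem_attach]
        refine ⟨⟨X', ?_⟩, by simp⟩
        rw [Finset.mem_toList, Set.Finite.mem_toFinset]
        exact hXX'
      have hYK : esat R₂ Y (.know i (.neg φ)) := (hXY _).mp hXK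
      exact hYK Y' hYY' hY'φ
  · rintro ⟨𝓑, hB0, hB⟩
    have main : ∀ ψ : EForm At A, ∀ X Y, 𝓑 X Y →
        (esat R₁ X ψ ↔ esat R₂ Y ψ) := by
      intro ψ
      induction ψ with
      | top => intro X Y _; simp [esat]
      | atom p => intro X Y hXY; rw [(hB X Y hXY).1]; simp [esat]
      | neg ψ ih => intro X Y hXY; simp only [esat]; rw [ih X Y hXY]
      | conj ψ₁ ψ₂ ih₁ ih₂ =>
        intro X Y hXY; simp only [esat]; rw [ih₁ X Y hXY, ih₂ X Y hXY]
      | know i ψ ih =>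
        intro X Y hXY
        obtain ⟨_, hzig, hzag⟩ := hB X Y hXY
        constructor
        · intro h Y' hYY'
          obtain ⟨X', hXX', hB'⟩ := hzag i Y' hYY'
          exact (ih X' Y' hB').mp (h X' hXX')
        · intro h X' hXX'
          obtain ⟨Y', hYY', hB'⟩ := hzig i X' hXX'
          exact (ih X' Y' hB').mpr (h Y' hYY')
    exact fun ψ => main ψ X₀ Y₀ hB0
end

section
/- In an image-finite Kripke labeled transition system, modal equivalence transfers along transitions: if states s and t satisfy exactly the same KT formulas and (s,a,s') ∈ T, then there exists t' with (t,a,t') ∈ T such that s' and t' satisfy exactly the same KT formulas. -/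
/-- KT formulas: φ ::= ⊤ | p | ¬φ | φ∧φ | ⟨π⟩φ | ψ -/
inductive KTForm (At A Act : Type) : Type
  | top : KTForm At A Act
  | atom : At → KTForm At A Act
  | neg : KTForm At A Act → KTForm At A Act
  | conj : KTForm At A Act → KTForm At A Act → KTForm At A Act
  | dia : Act → KTForm At A Act → KTForm At A Act
  | epi : EForm At A → KTForm At A Act

/-- A Kripke labeled transition system over atomic propositions `At`,
agents `A`, actions `Act`, and states `S`. -/
structure KLTS (At A Act S : Type) : Type where
  T : S → Act → S → Prop
  r : A → S → Set At → Set At → Prop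
  v : S → Set At

/-- KT satisfaction `M,s ⊨ φ`. -/
def KLTS.sat {At A Act S : Type} (M : KLTS At A Act S) :
    S → KTForm At A Act → Prop
  | _, .top => True
  | s, .atom p => p ∈ M.v s
  | s, .neg φ => ¬ M.sat s φ
  | s, .conj φ₁ φ₂ => M.sat s φ₁ ∧ M.sat s φ₂
  | s, .dia π φ => ∃ s', M.T s π s' ∧ M.sat s' φ
  | s, .epi ψ => esat (fun i => M.r i s) (M.v s) ψ

/-- Modal equivalence: `s` and `t` satisfy exactly the same KT formulas. -/
def KLTS.ModEquiv {At A Act S : Type} (M : KLTS At A Act S) (s t : S) : Prop :=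
  ∀ φ : KTForm At A Act, M.sat s φ ↔ M.sat t φ

/-- A bisimulation on `M`. -/
def KLTS.IsBisimulation {At A Act S : Type} (M : KLTS At A Act S)
    (B : S → S → Prop) : Prop :=
  Equivalence B ∧
  ∀ s t, B s t →
    (M.v s = M.v t) ∧
    (∀ a s', M.T s a s' → ∃ t', M.T t a t' ∧ B s' t') ∧
    (∃ 𝓑 : Set At → Set At → Prop, Equivalence 𝓑 ∧ 𝓑 (M.v s) (M.v t) ∧
      ∀ X Y, 𝓑 X Y → X = Y ∧
        ∀ i X', M.r i s X X' → ∃ Y', M.r i t Y Y' ∧ 𝓑 X' Y')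

/-- `s ∼ t`: some bisimulation relates `s` and `t`. -/
def KLTS.Bisimilar {At A Act S : Type} (M : KLTS At A Act S) (s t : S) : Prop :=
  ∃ B, M.IsBisimulation B ∧ B s t

/-- Image finiteness of a KLTS. -/
def KLTS.ImageFinite {At A Act S : Type} (M : KLTS At A Act S) : Prop :=
  (∀ s a, {s' | M.T s a s'}.Finite) ∧
  (∀ s i X, {Y | M.r i s X Y}.Finite)


/-! A transition `s →a s'` matched by no `t →a t'` with `t'` equivalent to `s'` would give, for
each of the finitely many `a`-successors `t'` of `t`, a formula true at `s'` and false at `t'`.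
Their conjunction `φ` makes `⟨a⟩φ` true at `s` and false at `t`, contradicting `s ≡ t`. -/

section

variable {At A Act S : Type} (M : KLTS At A Act S)

theorem KLTS.exists_sat_not_sat_of_not_modEquiv {x y : S} (h : ¬ M.ModEquiv x y) :
    ∃ φ, M.sat x φ ∧ ¬ M.sat y φ := by
  obtain ⟨φ, hφ⟩ := not_forall.mp h
  by_cases hx : M.sat x φ
  · exact ⟨φ, hx, fun hy => hφ (iff_of_true hx hy)⟩
  · exact ⟨.neg φ, hx, fun hy => hφ (iff_of_false hx hy)⟩

theorem KLTS.exists_sat_forall_not_sat_of_finite {x : S} {F : Set S} (hF : F.Finite)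
    (h : ∀ y ∈ F, ¬ M.ModEquiv x y) : ∃ φ, M.sat x φ ∧ ∀ y ∈ F, ¬ M.sat y φ := by
  induction F, hF using Set.Finite.induction_on with
  | empty => exact ⟨.top, trivial, by simp⟩
  | @insert y F _ _ ih =>
    obtain ⟨φ, hxφ, hFφ⟩ := ih fun z hz => h z (Set.mem_insert_of_mem y hz)
    obtain ⟨ψ, hxψ, hyψ⟩ := M.exists_sat_not_sat_of_not_modEquiv (h y (Set.mem_insert y F))
    refine ⟨.conj φ ψ, ⟨hxφ, hxψ⟩, ?_⟩
    rintro z (rfl | hz) ⟨hzφ, hzψ⟩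
    exacts [hyψ hzψ, hFφ z hz hzφ]

end

theorem modEquiv_transfer_general {At A Act S : Type}
    (M : KLTS At A Act S) (hfin : M.ImageFinite) (s t s' : S) (a : Act)
    (heq : M.ModEquiv s t) (hT : M.T s a s') :
    ∃ t', M.T t a t' ∧ M.ModEquiv s' t' := by
  by_contra! hnot
  obtain ⟨φ, hs'φ, hφ⟩ := M.exists_sat_forall_not_sat_of_finite (hfin.1 t a) hnot
  obtain ⟨t', htt', ht'φ⟩ := (heq (.dia a φ)).mp ⟨s', hT, hs'φ⟩
  exact hφ t' htt' ht'φ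

/-- In an image-finite KLTS, modal equivalence transfers along transitions. -/
theorem modEquiv_transfer {At A Act S : Type} [Nonempty S]
    (M : KLTS At A Act S) (hfin : M.ImageFinite) (s t s' : S) (a : Act)
    (heq : M.ModEquiv s t) (hT : M.T s a s') :
    ∃ t', M.T t a t' ∧ M.ModEquiv s' t' :=
  modEquiv_transfer_general M hfin s t s' a heq hT
end
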